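/- Let X be a Banach lattice, x* a lattice homomorphism with ‖x*‖ = 1, and μ ∈ X* a positive functional with μ disjoint from x* in the dual lattice X*. Define the equivalent lattice norm ‖x‖_μ := ‖x‖ + μ(|x|). Then the norm of x* with respect to ‖·‖_μ equals 1, and if x* attains its ‖·‖_μ-norm at x₀ then μ(x₀) = 0. -/

import Mathlib

/-- A real-valued lattice homomorphism on a Banach lattice. -/
def IsLatticeHomFunctional {X : Type*} [NormedAddCommGroup X] [Lattice X] [HasSolidNorm X] [IsOrderedAddMonoid X] [NormedSpace ℝ X]
    (f : X →L[ℝ] ℝ) : Prop :=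
  ∀ x y : X, f (x ⊔ y) = max (f x) (f y)

/-- An atom of a Banach lattice: a positive element generating a one-dimensional ideal. -/
def IsLatAtom {X : Type*} [NormedAddCommGroup X] [Lattice X] [HasSolidNorm X] [IsOrderedAddMonoid X] [NormedSpace ℝ X] (x₀ : X) : Prop :=
  0 < x₀ ∧ ∀ y : X, 0 ≤ y → y ≤ x₀ → ∃ r : ℝ, y = r • x₀

/-- `l` is the coordinate functional of the atom `x₀`: the band projection onto the span of
`x₀` is `x ↦ l x • x₀`, i.e. `x - l x • x₀` is disjoint from `x₀` for every `x`. -/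
def IsCoordinateFunctional {X : Type*} [NormedAddCommGroup X] [Lattice X] [HasSolidNorm X] [IsOrderedAddMonoid X] [NormedSpace ℝ X]
    (l : X →L[ℝ] ℝ) (x₀ : X) : Prop :=
  ∀ x : X, |x - l x • x₀| ⊓ x₀ = 0

/-- An equivalent lattice norm on `X`. -/
structure LatticeNorm (X : Type*) [NormedAddCommGroup X] [Lattice X] [NormedSpace ℝ X] where
  n : X → ℝ
  add_le : ∀ x y : X, n (x + y) ≤ n x + n y
  smul_eq : ∀ (r : ℝ) (x : X), n (r • x) = |r| * n x
  eq_zero_of : ∀ x : X, n x = 0 → x = 0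
  mono : ∀ x y : X, |x| ≤ |y| → n x ≤ n y
  lower : ∃ c : ℝ, 0 < c ∧ ∀ x : X, c * ‖x‖ ≤ n x
  upper : ∃ C : ℝ, 0 < C ∧ ∀ x : X, n x ≤ C * ‖x‖

/-! The bound `‖f‖_μ ≤ 1` holds because `|f x| ≤ ‖x‖ ≤ ‖x‖ + μ |x|`. For the reverse inequality,
take `0 ≤ x` of norm slightly below `1` with `f x` close to `1`. Disjointness of `f` and `μ`
splits `x = y + w` with `0 ≤ y, w`, `f y` and `μ w` small, so `w` almost norms `f` while
`‖w‖_μ ≈ ‖w‖ < 1`. Finally, if `|f x₀| = 1 ≥ ‖x₀‖_μ ≥ ‖x₀‖ ≥ |f x₀|` then `μ |x₀| = 0`, and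
`|μ x₀| ≤ μ |x₀|` by positivity. -/

section PositiveFunctional

variable {X F : Type*} [AddCommGroup X] [Lattice X] [IsOrderedAddMonoid X]
  [FunLike F X ℝ] [AddMonoidHomClass F X ℝ]

lemma abs_apply_le_apply_abs {μ : F} (hμ : ∀ x : X, 0 ≤ x → 0 ≤ μ x) (x : X) :
    |μ x| ≤ μ |x| := by
  have hle := hμ _ (sub_nonneg.mpr (le_abs_self x))
  have hneg := hμ _ (sub_nonneg.mpr (neg_le_abs x))
  rw [map_sub] at hle hneg
  rw [map_neg] at hneg
  exact abs_le.mpr ⟨by linarith, by linarith⟩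

lemma apply_eq_zero_of_apply_abs_eq_zero {μ : F} (hμ : ∀ x : X, 0 ≤ x → 0 ≤ μ x) {x : X}
    (hx : μ |x| = 0) : μ x = 0 :=
  abs_nonpos_iff.mp (hx ▸ abs_apply_le_apply_abs hμ x)

end PositiveFunctional

namespace IsLatticeHomFunctional

variable {X : Type*} [NormedAddCommGroup X] [Lattice X] [HasSolidNorm X] [IsOrderedAddMonoid X]
  [NormedSpace ℝ X] {f : X →L[ℝ] ℝ}

lemma map_nonneg (hf : IsLatticeHomFunctional f) {x : X} (hx : 0 ≤ x) : 0 ≤ f x := by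
  have h := hf x 0
  rw [sup_of_le_left hx, map_zero] at h
  exact h ▸ le_max_right _ _

lemma map_abs (hf : IsLatticeHomFunctional f) (x : X) : f |x| = |f x| := by
  rw [abs, hf, map_neg, abs_eq_max_neg]

lemma exists_nonneg_norm_lt_mul_lt_apply (hf : IsLatticeHomFunctional f) {r t : ℝ}
    (hr : r < ‖f‖) (ht : 0 < t) : ∃ x : X, 0 ≤ x ∧ ‖x‖ < t ∧ t * r < f x := by
  obtain ⟨z, hz, hrz⟩ := f.exists_lt_apply_of_lt_opNorm hr
  refine ⟨|t • z|, abs_nonneg _, ?_, ?_⟩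
  · rw [norm_abs_eq_norm, norm_smul, Real.norm_of_nonneg ht.le]
    exact mul_lt_of_lt_one_right ht hz
  · rw [hf.map_abs, map_smul, smul_eq_mul, abs_mul, abs_of_pos ht]
    exact mul_lt_mul_of_pos_left hrz ht

lemma exists_le_apply_lt_and_lt_apply (hf : IsLatticeHomFunctional f) {μ : X →L[ℝ] ℝ}
    (hμ : ∀ x : X, 0 ≤ x → 0 ≤ μ x)
    (hdisj : ∀ x : X, 0 ≤ x → ∀ ε : ℝ, 0 < ε → ∃ y : X, 0 ≤ y ∧ y ≤ x ∧ f y + μ (x - y) < ε)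
    {x : X} (hx : 0 ≤ x) {δ : ℝ} (hδ : 0 < δ) :
    ∃ w : X, 0 ≤ w ∧ w ≤ x ∧ μ w < δ ∧ f x - δ < f w := by
  obtain ⟨y, hy, hyx, hsmall⟩ := hdisj x hx δ hδ
  have hfy := hf.map_nonneg hy
  have hμw := hμ _ (sub_nonneg.mpr hyx)
  refine ⟨x - y, sub_nonneg.mpr hyx, sub_le_self x hy, by linarith, ?_⟩
  rw [map_sub]
  linarith

end IsLatticeHomFunctional

theorem latticeHom_renorm_disjoint_mu_general
    {X : Type*} [NormedAddCommGroup X] [Lattice X] [HasSolidNorm X] [IsOrderedAddMonoid X] [NormedSpace ℝ X]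
    (f : X →L[ℝ] ℝ) (hf : IsLatticeHomFunctional f) (hf1 : ‖f‖ = 1)
    (μ : X →L[ℝ] ℝ) (hμpos : ∀ x : X, 0 ≤ x → 0 ≤ μ x)
    (hdisj : ∀ x : X, 0 ≤ x → ∀ ε : ℝ, 0 < ε →
      ∃ y : X, 0 ≤ y ∧ y ≤ x ∧ f y + μ (x - y) < ε) :
    (∀ x : X, ‖x‖ + μ |x| ≤ 1 → |f x| ≤ 1) ∧
    (∀ ε : ℝ, 0 < ε → ∃ x : X, ‖x‖ + μ |x| ≤ 1 ∧ 1 - ε < f x) ∧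
    (∀ x₀ : X, ‖x₀‖ + μ |x₀| ≤ 1 → |f x₀| = 1 → μ x₀ = 0) := by
  have hf_le_norm (x : X) : |f x| ≤ ‖x‖ := by
    simpa [hf1] using f.le_opNorm x
  refine ⟨fun x hx => ?_, fun ε hε => ?_, fun x₀ hx₀ hfx₀ => ?_⟩
  · linarith [hf_le_norm x, hμpos _ (abs_nonneg x)]
  · set δ := min (ε / 4) (1 / 2)
    have hδ : 0 < δ := by positivity
    have hδε : δ ≤ ε / 4 := min_le_left _ _
    have hδ1 : δ ≤ 1 / 2 := min_le_right _ _
    obtain ⟨x, hx, hxn, hfx⟩ :=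
      hf.exists_nonneg_norm_lt_mul_lt_apply (hf1 ▸ sub_lt_self 1 hδ) (by linarith : 0 < 1 - δ)
    obtain ⟨w, hw, hwx, hμw, hfw⟩ := hf.exists_le_apply_lt_and_lt_apply hμpos hdisj hx hδ
    have hwn : ‖w‖ ≤ ‖x‖ := norm_le_norm_of_abs_le_abs (by rwa [abs_of_nonneg hw, abs_of_nonneg hx])
    refine ⟨w, ?_, ?_⟩
    · rw [abs_of_nonneg hw]
      linarith
    · nlinarith
  · have hμ0 : μ |x₀| = 0 := by
      linarith [hf_le_norm x₀, hμpos _ (abs_nonneg x₀)]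
    exact apply_eq_zero_of_apply_abs_eq_zero hμpos hμ0

/-- for a norm-one lattice homomorphism `f` and a positive functional `μ`
disjoint from `f` (disjointness expressed via the Riesz–Kantorovich formula), the norm of
`f` with respect to the equivalent lattice norm `‖x‖_μ := ‖x‖ + μ(|x|)` equals `1`, and if
`f` attains its `‖·‖_μ`-norm at `x₀` then `μ(x₀) = 0`. -/
theorem latticeHom_renorm_disjoint_mu
    {X : Type*} [NormedAddCommGroup X] [Lattice X] [HasSolidNorm X] [IsOrderedAddMonoid X] [NormedSpace ℝ X] [CompleteSpace X]
    (f : X →L[ℝ] ℝ) (hf : IsLatticeHomFunctional f) (hf1 : ‖f‖ = 1)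
    (μ : X →L[ℝ] ℝ) (hμpos : ∀ x : X, 0 ≤ x → 0 ≤ μ x)
    (hdisj : ∀ x : X, 0 ≤ x → ∀ ε : ℝ, 0 < ε →
      ∃ y : X, 0 ≤ y ∧ y ≤ x ∧ f y + μ (x - y) < ε) :
    (∀ x : X, ‖x‖ + μ |x| ≤ 1 → |f x| ≤ 1) ∧
    (∀ ε : ℝ, 0 < ε → ∃ x : X, ‖x‖ + μ |x| ≤ 1 ∧ 1 - ε < f x) ∧
    (∀ x₀ : X, ‖x₀‖ + μ |x₀| ≤ 1 → |f x₀| = 1 → μ x₀ = 0) :=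
  latticeHom_renorm_disjoint_mu_general f hf hf1 μ hμpos hdisj
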